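/- Let k ≥ 3 be an odd integer and let W_k be the vertex-signed graph consisting of a cycle v_1 v_2 … v_{2k} in which the vertices with odd index are negative and those with even index are positive, a positive central vertex u adjacent to all k negative cycle vertices, and for each positive cycle vertex a pendant edge joining it to a new leaf vertex. Let c : E(W_k) → {0,a,b} be an edge-labeling satisfying the weak signed edge-labeling parity conditions at every cycle vertex and at the central vertex u (no condition is imposed at the leaf vertices). Then among the k pendant edges, the number labeled a is even, the number labeled b is even, the number labeled 0 is odd, and not all of the pendant edges are labeled 0. -/

import Mathlib

/-- The three labels `0`, `a`, `b` used for signed edge-labelings. -/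
inductive EdgeLabel : Type
  | zero : EdgeLabel
  | a : EdgeLabel
  | b : EdgeLabel
deriving DecidableEq

/-- `labelCount G c x v` is `d_x(v)`: the number of edges of `G` incident to `v`
that carry the label `x` under the edge-labeling `c`. -/
noncomputable def labelCount {V : Type*} (G : SimpleGraph V) (c : Sym2 V → EdgeLabel)
    (x : EdgeLabel) (v : V) : ℕ :=
  {e ∈ G.incidenceSet v | c e = x}.ncard

/-- The weak signed edge-labeling parity conditions at a single vertex `v`:
`d₀(v) ≡ deg(v) (mod 2)`, and `d_a(v) ≡ d_b(v) ≡ deg(v) (mod 2)` if `v` is positive,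
while `d_a(v) ≡ d_b(v) ≡ deg(v) + 1 (mod 2)` if `v` is negative. -/
def WeakParityAt {V : Type*} (G : SimpleGraph V) (pos : V → Prop)
    (c : Sym2 V → EdgeLabel) (v : V) : Prop :=
  labelCount G c .zero v % 2 = (G.neighborSet v).ncard % 2 ∧
  (pos v → labelCount G c .a v % 2 = (G.neighborSet v).ncard % 2 ∧
           labelCount G c .b v % 2 = (G.neighborSet v).ncard % 2) ∧
  (¬ pos v → labelCount G c .a v % 2 = ((G.neighborSet v).ncard + 1) % 2 ∧
             labelCount G c .b v % 2 = ((G.neighborSet v).ncard + 1) % 2)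

/-- Vertices of the gadget `W k`: the `2k` cycle vertices `v_1, …, v_{2k}`
(`Sum.inl i` stands for `v_{i+1}`), the central vertex (`Sum.inr (Sum.inl ())`),
and the `k` leaf vertices (`Sum.inr (Sum.inr j)`). -/
abbrev WVert (k : ℕ) : Type := Fin (2 * k) ⊕ (Unit ⊕ Fin k)

/-- The adjacency generating relation of the gadget `W k`:
the cycle `v_1 v_2 ⋯ v_{2k}`, the spikes from the central vertex to every
odd-indexed (negative) cycle vertex `v_1, v_3, …, v_{2k-1}`, and a pendant edge from
every even-indexed (positive) cycle vertex `v_2, v_4, …, v_{2k}` to its own leaf. -/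
def wRel (k : ℕ) : WVert k → WVert k → Prop
  | .inl i, .inl j => (i.val + 1) % (2 * k) = j.val
  | .inr (.inl _), .inl i => i.val % 2 = 0
  | .inr (.inr j), .inl i => i.val = 2 * j.val + 1
  | _, _ => False

/-- The gadget graph `W k`. -/
def Wgraph (k : ℕ) : SimpleGraph (WVert k) := SimpleGraph.fromRel (wRel k)

/-- The sign function of `W k`: the cycle vertex `v_{i+1} = Sum.inl i` is negative when
`i` is even (i.e. `v_1, v_3, …` are negative) and positive when `i` is odd; the central
vertex and the leaves are positive. -/
def wPos (k : ℕ) : WVert k → Prop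
  | .inl i => i.val % 2 = 1
  | .inr _ => True

/-- The pendant edge attached to the `j`-th positive cycle vertex `v_{2j+2}`. -/
def pendantEdge (k : ℕ) (j : Fin k) : Sym2 (WVert k) :=
  s(Sum.inl ⟨2 * j.val + 1, by have := j.isLt; omega⟩, Sum.inr (Sum.inr j))

/-!
Summing `d_x` over all vertices counts every `x`-labelled edge twice, so the sum is even. Each
cycle vertex has degree 3, the central vertex has odd degree `k`, and `k` cycle vertices are
negative, so the parity conditions make the sum over the non-leaf vertices `≡ [x = 0] (mod 2)`,
while each leaf contributes `[c(pendant edge) = x]`. This gives the three parities.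

If every pendant edge were labelled `0`, a positive cycle vertex (degree 3, all three counts odd)
would have no other `0`-edge, so the odd number of `0`-edges at a negative cycle vertex forces its
spoke to be labelled `0`; then `d_a(u) = 0`, although `deg u = k` is odd.
-/

open SimpleGraph

section LabelCount

variable {V : Type*} (G : SimpleGraph V) (c : Sym2 V → EdgeLabel)

def labelSubgraph (x : EdgeLabel) : SimpleGraph V :=
  fromEdgeSet {e ∈ G.edgeSet | c e = x}

lemma incidenceSet_labelSubgraph (x : EdgeLabel) (v : V) :
    (labelSubgraph G c x).incidenceSet v = {e ∈ G.incidenceSet v | c e = x} := by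
  ext e
  simp only [labelSubgraph, incidenceSet, edgeSet_fromEdgeSet, Set.mem_ofPred_eq, Set.mem_sdiff]
  constructor
  · rintro ⟨⟨⟨he, hx⟩, -⟩, hv⟩
    exact ⟨⟨he, hv⟩, hx⟩
  · rintro ⟨⟨he, hv⟩, hx⟩
    exact ⟨⟨⟨he, hx⟩, G.not_isDiag_of_mem_edgeSet he⟩, hv⟩

lemma labelCount_eq_degree_labelSubgraph (x : EdgeLabel) (v : V) [DecidableEq V]
    [Fintype ((labelSubgraph G c x).neighborSet v)] :
    labelCount G c x v = (labelSubgraph G c x).degree v := by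
  rw [labelCount, ← incidenceSet_labelSubgraph, ← card_incidenceSet_eq_degree,
    ← Nat.card_eq_fintype_card, Nat.card_coe_set_eq]

theorem even_sum_labelCount [Fintype V] (x : EdgeLabel) : Even (∑ v, labelCount G c x v) := by
  classical
  simp_rw [labelCount_eq_degree_labelSubgraph, sum_degrees_eq_twice_card_edges]
  exact even_two_mul _

lemma ncard_incidenceSet (v : V) : (G.incidenceSet v).ncard = (G.neighborSet v).ncard := by
  classical
  rw [← Nat.card_coe_set_eq, Nat.card_congr (G.incidenceSetEquivNeighborSet v),
    Nat.card_coe_set_eq]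

theorem labelCount_zero_add_a_add_b [Finite V] (v : V) :
    labelCount G c .zero v + labelCount G c .a v + labelCount G c .b v =
      (G.neighborSet v).ncard := by
  have hsplit : {e ∈ G.incidenceSet v | c e = .zero} ∪ {e ∈ G.incidenceSet v | c e = .a} ∪
      {e ∈ G.incidenceSet v | c e = .b} = G.incidenceSet v := by
    ext e
    cases h : c e <;> simp [h]
  rw [labelCount, labelCount, labelCount, ← Set.ncard_union_eq, ← Set.ncard_union_eq, hsplit,
    ncard_incidenceSet]
  · rw [Set.disjoint_union_left]
    constructor <;> exact Set.disjoint_left.mpr fun e h1 h2 => by simp_all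
  · exact Set.disjoint_left.mpr fun e h1 h2 => by simp_all

lemma exists_adj_of_mem_incidenceSet {v : V} {e : Sym2 V} (he : e ∈ G.incidenceSet v) :
    ∃ w, G.Adj v w ∧ e = s(v, w) := by
  obtain ⟨w, rfl⟩ := Sym2.mem_iff_exists.mp he.2
  exact ⟨w, (G.mem_incidenceSet v w).mp he, rfl⟩

lemma eq_of_labelCount_eq_one {x : EdgeLabel} {v : V} (h : labelCount G c x v = 1)
    {e e' : Sym2 V} (he : e ∈ G.incidenceSet v) (he' : e' ∈ G.incidenceSet v)
    (hce : c e = x) (hce' : c e' = x) : e = e' := by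
  obtain ⟨f, hf⟩ := Set.ncard_eq_one.mp h
  have h1 : e ∈ ({f} : Set _) := hf ▸ ⟨he, hce⟩
  have h2 : e' ∈ ({f} : Set _) := hf ▸ ⟨he', hce'⟩
  exact h1.trans h2.symm

variable {G c} {pos : V → Prop} {v : V}

open Classical in
lemma WeakParityAt.natCast_labelCount (h : WeakParityAt G pos c v) (x : EdgeLabel) :
    (labelCount G c x v : ZMod 2) =
      (G.neighborSet v).ncard + if ¬ pos v ∧ x ≠ .zero then 1 else 0 := by
  obtain ⟨h0, hpos, hneg⟩ := h
  by_cases hv : pos v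
  · rw [if_neg (by tauto), add_zero, ZMod.natCast_eq_natCast_iff']
    cases x
    exacts [h0, (hpos hv).1, (hpos hv).2]
  · cases x
    · rw [if_neg (by tauto), add_zero, ZMod.natCast_eq_natCast_iff']
      exact h0
    all_goals
      rw [if_pos (by simp [hv]), ← Nat.cast_one, ← Nat.cast_add, ZMod.natCast_eq_natCast_iff']
    exacts [(hneg hv).1, (hneg hv).2]

lemma WeakParityAt.labelCount_eq_one [Finite V] (h : WeakParityAt G pos c v) (hv : pos v)
    (hdeg : (G.neighborSet v).ncard = 3) (x : EdgeLabel) : labelCount G c x v = 1 := by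
  obtain ⟨h0, hpos, -⟩ := h
  obtain ⟨ha, hb⟩ := hpos hv
  have hsum := labelCount_zero_add_a_add_b G c v
  rw [hdeg] at h0 ha hb hsum
  cases x <;> omega

end LabelCount

section Gadget

variable {k : ℕ}

abbrev wCenter (k : ℕ) : WVert k := Sum.inr (Sum.inl ())

abbrev wLeaf (k : ℕ) (j : Fin k) : WVert k := Sum.inr (Sum.inr j)

lemma wgraph_adj_inl_inl {i j : Fin (2 * k)} :
    (Wgraph k).Adj (.inl i) (.inl j) ↔
      i ≠ j ∧ ((i.val + 1) % (2 * k) = j.val ∨ (j.val + 1) % (2 * k) = i.val) := by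
  simp [Wgraph, wRel]

@[simp]
lemma wgraph_adj_wCenter_inl {i : Fin (2 * k)} :
    (Wgraph k).Adj (wCenter k) (.inl i) ↔ i.val % 2 = 0 := by
  simp [Wgraph, wRel]

@[simp]
lemma wgraph_adj_wLeaf_inl {j : Fin k} {i : Fin (2 * k)} :
    (Wgraph k).Adj (wLeaf k j) (.inl i) ↔ i.val = 2 * j.val + 1 := by
  simp [Wgraph, wRel]

@[simp]
lemma wgraph_not_adj_inr_inr {u u' : Unit ⊕ Fin k} : ¬ (Wgraph k).Adj (.inr u) (.inr u') := by
  simp [Wgraph, wRel]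

lemma val_mod_two_ne_of_wgraph_adj {i j : Fin (2 * k)} (h : (Wgraph k).Adj (.inl i) (.inl j)) :
    j.val % 2 ≠ i.val % 2 := by
  have hmod (m : ℕ) : m % (2 * k) % 2 = m % 2 := Nat.mod_mod_of_dvd m (dvd_mul_right 2 k)
  rcases (wgraph_adj_inl_inl.mp h).2 with h | h
  · have := hmod (i.val + 1)
    rw [h] at this
    omega
  · have := hmod (j.val + 1)
    rw [h] at this
    omega

lemma val_one_fin_two_mul [NeZero k] : (1 : Fin (2 * k)).val = 1 := by
  rw [Fin.val_one', Nat.mod_eq_of_lt (by have := NeZero.pos k; omega)]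

lemma wgraph_adj_inl_inl_iff [NeZero k] {i j : Fin (2 * k)} :
    (Wgraph k).Adj (.inl i) (.inl j) ↔ j = i + 1 ∨ j = i - 1 := by
  have hsucc (m : Fin (2 * k)) : (m.val + 1) % (2 * k) = (m + 1).val := by
    rw [Fin.val_add, val_one_fin_two_mul]
  have hone_ne : (1 : Fin (2 * k)) ≠ 0 := fun h => by simpa [val_one_fin_two_mul] using congrArg Fin.val h
  rw [wgraph_adj_inl_inl, hsucc, hsucc, ← Fin.ext_iff, ← Fin.ext_iff]
  constructor
  · rintro ⟨-, h | h⟩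
    exacts [Or.inl h.symm, Or.inr (eq_sub_of_add_eq h)]
  · rintro (rfl | rfl)
    · exact ⟨fun h => hone_ne (add_eq_left.mp h.symm), Or.inl rfl⟩
    · exact ⟨fun h => hone_ne (sub_eq_self.mp h.symm), Or.inr (sub_add_cancel i 1)⟩

lemma exists_wgraph_adj_inr_inl_iff (i : Fin (2 * k)) :
    ∃ w : Unit ⊕ Fin k, ∀ u, (Wgraph k).Adj (.inr u) (.inl i) ↔ u = w := by
  rcases Nat.mod_two_eq_zero_or_one i.val with h | h
  · refine ⟨.inl (), fun u => ?_⟩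
    rcases u with ⟨⟨⟩⟩ | j
    · simpa using h
    · simp
      omega
  · refine ⟨.inr ⟨i.val / 2, by have := i.isLt; omega⟩, fun u => ?_⟩
    rcases u with ⟨⟨⟩⟩ | j
    · simp
      omega
    · simp [Fin.ext_iff]
      omega

lemma ncard_neighborSet_inl (hk : 2 ≤ k) (i : Fin (2 * k)) :
    ((Wgraph k).neighborSet (.inl i)).ncard = 3 := by
  have : NeZero k := ⟨by omega⟩
  obtain ⟨w, hw⟩ := exists_wgraph_adj_inr_inl_iff i
  have hne : i + 1 ≠ i - 1 := fun h => by
    have h2 : i + (1 + 1) = i := by rw [← add_assoc, h, sub_add_cancel]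
    have := congrArg Fin.val (add_eq_left.mp h2)
    rw [Fin.val_add, val_one_fin_two_mul, Nat.mod_eq_of_lt (by omega), Fin.val_zero] at this
    omega
  refine Set.ncard_eq_three.mpr ⟨.inl (i + 1), .inl (i - 1), .inr w, by simpa using hne,
    by simp, by simp, ?_⟩
  ext v
  rcases v with m | u
  · simp [wgraph_adj_inl_inl_iff]
  · rw [mem_neighborSet, adj_comm, hw]
    simp

lemma ncard_setOf_val_mod_two_eq_zero (k : ℕ) : {i : Fin (2 * k) | i.val % 2 = 0}.ncard = k := by
  have hrange : {i : Fin (2 * k) | i.val % 2 = 0} =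
      Set.range (fun j : Fin k => (⟨2 * j.val, by omega⟩ : Fin (2 * k))) := by
    ext i
    simp only [Set.mem_ofPred_eq, Set.mem_range, Fin.ext_iff]
    constructor
    · exact fun h => ⟨⟨i.val / 2, by omega⟩, by simp; omega⟩
    · rintro ⟨j, hj⟩
      omega
  rw [hrange, Set.ncard_range_of_injective fun a b h => by simpa [Fin.ext_iff] using h,
    Nat.card_fin]

lemma ncard_neighborSet_wCenter (k : ℕ) : ((Wgraph k).neighborSet (wCenter k)).ncard = k := by
  have himage : (Wgraph k).neighborSet (wCenter k) = Sum.inl '' {i | i.val % 2 = 0} := by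
    ext v
    rcases v with i | u <;> simp
  rw [himage, Set.ncard_image_of_injective _ Sum.inl_injective, ncard_setOf_val_mod_two_eq_zero]

lemma incidenceSet_wLeaf (j : Fin k) : (Wgraph k).incidenceSet (wLeaf k j) = {pendantEdge k j} := by
  ext e
  constructor
  · intro he
    obtain ⟨w, hw, rfl⟩ := exists_adj_of_mem_incidenceSet _ he
    rcases w with i | u
    · rw [wgraph_adj_wLeaf_inl] at hw
      rw [pendantEdge, Sym2.eq_swap]
      congr
      exact Fin.ext hw
    · exact absurd hw wgraph_not_adj_inr_inr
  · rintro rfl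
    rw [pendantEdge, mk'_mem_incidenceSet_right_iff, adj_comm]
    simp

lemma labelCount_wLeaf (c : Sym2 (WVert k) → EdgeLabel) (x : EdgeLabel) (j : Fin k) :
    labelCount (Wgraph k) c x (wLeaf k j) = if c (pendantEdge k j) = x then 1 else 0 := by
  rw [labelCount, incidenceSet_wLeaf]
  split_ifs with h
  · rw [Set.sep_eq_self_iff_mem_true.mpr (by simpa using h), Set.ncard_singleton]
  · rw [Set.sep_eq_empty_iff_mem_false.mpr (by simpa using h), Set.ncard_empty]

lemma sum_labelCount_inl (hk : 2 ≤ k) (c : Sym2 (WVert k) → EdgeLabel)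
    (hcycle : ∀ i, WeakParityAt (Wgraph k) (wPos k) c (.inl i)) (x : EdgeLabel) :
    ∑ i, (labelCount (Wgraph k) c x (.inl i) : ZMod 2) = if x = .zero then 0 else k := by
  simp_rw [(hcycle _).natCast_labelCount, ncard_neighborSet_inl hk, Finset.sum_add_distrib,
    Finset.sum_boole]
  have h3 : ∑ _i : Fin (2 * k), ((3 : ℕ) : ZMod 2) = 0 := by
    rw [Finset.sum_const, Finset.card_univ, Fintype.card_fin, nsmul_eq_mul, Nat.cast_mul]
    simp [show (2 : ZMod 2) = 0 from rfl]
  rw [h3, zero_add]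
  split_ifs with hx
  · simp [hx]
  · rw [← Set.ncard_coe_finset]
    convert congrArg Nat.cast (ncard_setOf_val_mod_two_eq_zero k) using 3
    ext i
    simp [wPos, hx]

lemma natCast_ncard_pendantEdge (hk : 2 ≤ k) (hkodd : Odd k) (c : Sym2 (WVert k) → EdgeLabel)
    (hcycle : ∀ i, WeakParityAt (Wgraph k) (wPos k) c (.inl i))
    (hcenter : WeakParityAt (Wgraph k) (wPos k) c (wCenter k)) (x : EdgeLabel) :
    ({j | c (pendantEdge k j) = x}.ncard : ZMod 2) = if x = .zero then 1 else 0 := by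
  have htotal : ∑ v, (labelCount (Wgraph k) c x v : ZMod 2) = 0 := by
    rw [← Nat.cast_sum, ZMod.natCast_eq_zero_iff_even]
    exact even_sum_labelCount _ c x
  have hleaves : ∑ j, (labelCount (Wgraph k) c x (wLeaf k j) : ZMod 2) =
      {j | c (pendantEdge k j) = x}.ncard := by
    simp_rw [labelCount_wLeaf, Nat.cast_ite, Nat.cast_one, Nat.cast_zero, Finset.sum_boole,
      ← Set.ncard_coe_finset, Finset.coe_filter, Finset.mem_univ, true_and]
  rw [Fintype.sum_sum_type, Fintype.sum_sum_type, Fintype.sum_unique (ι := Unit),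
    sum_labelCount_inl hk c hcycle, hcenter.natCast_labelCount, ncard_neighborSet_wCenter,
    hleaves] at htotal
  have hk1 : (k : ZMod 2) = 1 := (ZMod.natCast_eq_one_iff_odd).mpr hkodd
  generalize ({j | c (pendantEdge k j) = x}.ncard : ZMod 2) = n at htotal ⊢
  cases x <;> simp [wPos, hk1] at htotal ⊢ <;> revert n <;> decide

lemma pendantEdge_mem_incidenceSet {i : Fin (2 * k)} {j : Fin k} (h : i.val = 2 * j.val + 1) :
    pendantEdge k j ∈ (Wgraph k).incidenceSet (.inl i) := by
  rw [pendantEdge, show (⟨2 * j.val + 1, _⟩ : Fin (2 * k)) = i from Fin.ext h.symm,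
    mk'_mem_incidenceSet_left_iff, adj_comm, wgraph_adj_wLeaf_inl]
  exact h

lemma spoke_label_eq_zero (hk : 2 ≤ k) (c : Sym2 (WVert k) → EdgeLabel)
    (hcycle : ∀ i, WeakParityAt (Wgraph k) (wPos k) c (.inl i))
    (hpendant : ∀ j, c (pendantEdge k j) = .zero) {i : Fin (2 * k)} (hi : i.val % 2 = 0) :
    c s(.inl i, wCenter k) = .zero := by
  have hzero : labelCount (Wgraph k) c .zero (.inl i) ≠ 0 := by
    have := (hcycle i).1
    rw [ncard_neighborSet_inl hk] at this
    omega
  obtain ⟨e, he, hce⟩ := Set.nonempty_of_ncard_ne_zero hzero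
  obtain ⟨w, hw, rfl⟩ := exists_adj_of_mem_incidenceSet _ he
  rcases w with m | ⟨⟨⟩⟩ | j
  -- `m` is a positive cycle vertex, and its only `0`-edge is its pendant edge.
  · have hm : m.val % 2 = 1 := by have := val_mod_two_ne_of_wgraph_adj hw; omega
    have hj : m.val = 2 * (m.val / 2) + 1 := by omega
    have hone := (hcycle m).labelCount_eq_one hm (ncard_neighborSet_inl hk m) .zero
    have := eq_of_labelCount_eq_one _ c hone ((mk'_mem_incidenceSet_right_iff _).mpr hw)
      (pendantEdge_mem_incidenceSet (j := ⟨m.val / 2, by omega⟩) hj) hce (hpendant _)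
    simp [pendantEdge] at this
  · exact hce
  · rw [adj_comm, wgraph_adj_wLeaf_inl] at hw
    omega

lemma exists_pendantEdge_ne_zero (hk : 2 ≤ k) (hkodd : Odd k) (c : Sym2 (WVert k) → EdgeLabel)
    (hcycle : ∀ i, WeakParityAt (Wgraph k) (wPos k) c (.inl i))
    (hcenter : WeakParityAt (Wgraph k) (wPos k) c (wCenter k)) :
    ∃ j, c (pendantEdge k j) ≠ .zero := by
  by_contra! hpendant
  have hzero : labelCount (Wgraph k) c .a (wCenter k) = 0 := by
    rw [labelCount, Set.ncard_eq_zero, Set.eq_empty_iff_forall_notMem]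
    rintro e ⟨he, hce⟩
    obtain ⟨w, hw, rfl⟩ := exists_adj_of_mem_incidenceSet _ he
    rcases w with i | u
    · rw [wgraph_adj_wCenter_inl] at hw
      rw [Sym2.eq_swap, spoke_label_eq_zero hk c hcycle hpendant hw] at hce
      exact EdgeLabel.noConfusion hce
    · exact wgraph_not_adj_inr_inr hw
  have := (hcenter.2.1 trivial).1
  rw [hzero, ncard_neighborSet_wCenter, Nat.odd_iff.mp hkodd] at this
  omega

end Gadget

/-- **The pendant-edge parity property of the gadget `W k`.**
Let `k ≥ 3` be odd and let `c : E(W_k) → {0,a,b}` satisfy the weak signed edge-labeling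
parity conditions at every cycle vertex and at the central vertex (nothing is imposed
at the leaves).  Then among the `k` pendant edges, the number labeled `a` is even, the
number labeled `b` is even, the number labeled `0` is odd, and not all pendant edges
are labeled `0`. -/
theorem gadget_pendant_edges_parity (k : ℕ) (hk3 : 3 ≤ k) (hkodd : Odd k)
    (c : Sym2 (WVert k) → EdgeLabel)
    (hc : ∀ v : WVert k, (∃ i : Fin (2 * k), v = Sum.inl i) ∨ v = Sum.inr (Sum.inl ()) →
      WeakParityAt (Wgraph k) (wPos k) c v) :
    Even {j : Fin k | c (pendantEdge k j) = EdgeLabel.a}.ncard ∧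
    Even {j : Fin k | c (pendantEdge k j) = EdgeLabel.b}.ncard ∧
    Odd {j : Fin k | c (pendantEdge k j) = EdgeLabel.zero}.ncard ∧
    ∃ j : Fin k, c (pendantEdge k j) ≠ EdgeLabel.zero := by
  have hk : 2 ≤ k := by omega
  have hcycle (i : Fin (2 * k)) : WeakParityAt (Wgraph k) (wPos k) c (.inl i) :=
    hc _ (.inl ⟨i, rfl⟩)
  have hcenter := hc (wCenter k) (.inr rfl)
  have hcount := natCast_ncard_pendantEdge hk hkodd c hcycle hcenter
  refine ⟨?_, ?_, ?_, exists_pendantEdge_ne_zero hk hkodd c hcycle hcenter⟩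
  · exact ZMod.natCast_eq_zero_iff_even.mp (by simpa using hcount .a)
  · exact ZMod.natCast_eq_zero_iff_even.mp (by simpa using hcount .b)
  · exact ZMod.natCast_eq_one_iff_odd.mp (by simpa using hcount .zero)
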